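/- arXiv:1908.11401 — 2 statements merged into one kernel-verified Lean document; each statement's English description precedes it below -/
import Mathlib

section
/- Let M and N be unital C*-algebras with M commutative, and let φ : M → N be a Jordan homomorphism. Then φ is multiplicative, i.e. φ(xy) = φ(x)φ(y) for all x, y ∈ M; hence φ is a unital *-homomorphism. -/
/-- A Jordan homomorphism `φ` from a commutative unital C*-algebra `M` to a unital
C*-algebra `N` is multiplicative, hence a unital *-homomorphism. -/
theorem jordan_hom_of_commutative_is_mult
    {M N : Type*}
    [NormedCommRing M] [StarRing M] [CStarRing M] [NormedAlgebra ℂ M]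
    [StarModule ℂ M] [CompleteSpace M]
    [NormedRing N] [StarRing N] [CStarRing N] [NormedAlgebra ℂ N]
    [StarModule ℂ N] [CompleteSpace N]
    (φ : M →ₗ[ℂ] N)
    (hunit : φ 1 = 1)
    (hstar : ∀ x : M, φ (star x) = star (φ x))
    (hsq : ∀ x : M, φ (x ^ 2) = φ x ^ 2) :
    ∀ x y : M, φ (x * y) = φ x * φ y := by
  -- halving
  have half : ∀ p q : N, p + p = q + q → p = q := by
    intro p q h
    have h2 : (2 : ℂ) • p = (2 : ℂ) • q := by rw [two_smul, two_smul]; exact h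
    exact smul_right_injective N two_ne_zero h2
  -- Jordan identity (polarization of `hsq`)
  have hJ : ∀ x y : M, φ (x * y) + φ (x * y) = φ x * φ y + φ y * φ x := by
    intro x y
    have h := hsq (x + y)
    have hexp : (x + y) ^ 2 = x ^ 2 + (x * y + x * y) + y ^ 2 := by ring
    rw [hexp, map_add, map_add, map_add, map_add, hsq, hsq] at h
    have h2 : (φ x + φ y) ^ 2 = φ x ^ 2 + (φ x * φ y + φ y * φ x) + φ y ^ 2 := by
      noncomm_ring
    rw [h2] at h
    exact add_left_cancel (add_right_cancel h)
  -- Jordan triple identity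
  have htr : ∀ x y : M, φ (x ^ 2 * y) = φ x * φ y * φ x := by
    intro x y
    set a := φ x with ha
    set b := φ y with hb
    have h1 : φ (x * y) + φ (x * y) = a * b + b * a := hJ x y
    have h2 : φ (x ^ 2 * y) + φ (x ^ 2 * y) = a * φ (x * y) + φ (x * y) * a := by
      have hm : x * (x * y) = x ^ 2 * y := by ring
      have := hJ x (x * y)
      rwa [hm] at this
    have h3 : φ (x ^ 2 * y) + φ (x ^ 2 * y) = a ^ 2 * b + b * a ^ 2 := by
      have := hJ (x ^ 2) y
      rwa [hsq x] at this
    -- combine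
    have e2 : (φ (x ^ 2 * y) + φ (x ^ 2 * y)) + (φ (x ^ 2 * y) + φ (x ^ 2 * y))
        = a * (a * b + b * a) + (a * b + b * a) * a := by
      calc (φ (x ^ 2 * y) + φ (x ^ 2 * y)) + (φ (x ^ 2 * y) + φ (x ^ 2 * y))
          = (a * φ (x * y) + φ (x * y) * a) + (a * φ (x * y) + φ (x * y) * a) := by
            rw [h2]
        _ = a * (φ (x * y) + φ (x * y)) + (φ (x * y) + φ (x * y)) * a := by noncomm_ring
        _ = a * (a * b + b * a) + (a * b + b * a) * a := by rw [h1]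
    have e3 : (a ^ 2 * b + b * a ^ 2) + (a ^ 2 * b + b * a ^ 2)
        = a * (a * b + b * a) + (a * b + b * a) * a := by rw [← h3]; exact e2
    have e4 : a * (a * b + b * a) + (a * b + b * a) * a
        = (a ^ 2 * b + b * a ^ 2) + (a * b * a + a * b * a) := by noncomm_ring
    have e5 : a ^ 2 * b + b * a ^ 2 = a * b * a + a * b * a :=
      add_left_cancel (e3.trans e4)
    apply half
    rw [h3, e5]
  -- commutation for self-adjoint elements
  have hcomm_sa : ∀ x y : M, star x = x → star y = y → φ x * φ y = φ y * φ x := by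
    intro x y hx hy
    set a := φ x with ha'
    set b := φ y with hb'
    have ha : star a = a := by rw [ha', ← hstar, hx]
    have hb : star b = b := by rw [hb', ← hstar, hy]
    set F := φ (x ^ 2 * y ^ 2) with hF
    have f2 : F = a * b ^ 2 * a := by rw [hF, htr x (y ^ 2), hsq y]
    have f3 : F = b * a ^ 2 * b := by
      have hm : x ^ 2 * y ^ 2 = y ^ 2 * x ^ 2 := by ring
      rw [hF, hm, htr y (x ^ 2), hsq x]
    have f4 : F + F + F + F = (a * b + b * a) * (a * b + b * a) := by
      have hp : φ (x * y) + φ (x * y) = a * b + b * a := hJ x y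
      have hFp : F = φ (x * y) * φ (x * y) := by
        have hm : x ^ 2 * y ^ 2 = (x * y) ^ 2 := by ring
        rw [hF, hm, hsq, sq]
      calc F + F + F + F
          = (φ (x * y) + φ (x * y)) * (φ (x * y) + φ (x * y)) := by
            rw [hFp]; noncomm_ring
        _ = (a * b + b * a) * (a * b + b * a) := by rw [hp]
    have hc2 : (a * b - b * a) ^ 2
        = (a * b + b * a) * (a * b + b * a)
          - (a * b ^ 2 * a + a * b ^ 2 * a) - (b * a ^ 2 * b + b * a ^ 2 * b) := by
      noncomm_ring
    have hc2' : (a * b - b * a) ^ 2 = 0 := by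
      rw [hc2, ← f4, ← f2, ← f3]; abel
    have hss : star (a * b - b * a) * (a * b - b * a) = 0 := by
      rw [star_sub, star_mul, star_mul, ha, hb]
      have : (b * a - a * b) * (a * b - b * a) = -((a * b - b * a) ^ 2) := by
        noncomm_ring
      rw [this, hc2', neg_zero]
    have hnorm : ‖a * b - b * a‖ = 0 := by
      have h := CStarRing.norm_star_mul_self (x := a * b - b * a)
      rw [hss, norm_zero] at h
      exact (mul_self_eq_zero.mp h.symm)
    have : a * b - b * a = 0 := norm_eq_zero.mp hnorm
    exact sub_eq_zero.mp this
  -- commutation in general, via real/imaginary parts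
  have hcomm : ∀ x y : M, φ x * φ y = φ y * φ x := by
    have key : ∀ x y : M, Commute (φ x) (φ y) := by
      have sa : ∀ x y : M, star x = x → Commute (φ x) (φ y) := by
        intro x y hx
        have hyd := realPart_add_I_smul_imaginaryPart y
        rw [← hyd, map_add, LinearMap.map_smul]
        have c1 : Commute (φ x) (φ (realPart y : M)) :=
          hcomm_sa x _ hx (realPart y).2.star_eq
        have c2 : Commute (φ x) (φ (imaginaryPart y : M)) :=
          hcomm_sa x _ hx (imaginaryPart y).2.star_eq
        exact Commute.add_right c1 (c2.smul_right _)
      intro x y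
      have hxd := realPart_add_I_smul_imaginaryPart x
      rw [← hxd, map_add, LinearMap.map_smul]
      exact Commute.add_left (sa _ y (realPart x).2.star_eq)
        ((sa _ y (imaginaryPart x).2.star_eq).smul_left _)
    exact key
  intro x y
  apply half
  have h := hJ x y
  rw [hcomm y x] at h
  exact h
end

section
/- Let M and N be unital C*-algebras, φ : M → N a Jordan homomorphism, and x, y ∈ M self-adjoint elements with xy = yx. Then φ(x)φ(y) = φ(y)φ(x) and φ(xy) = φ(x)φ(y). -/
/-!
Polarizing `φ (x ^ 2) = φ x ^ 2` shows that `φ` preserves the Jordan product `a ∘ b = ab + ba`.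
For commuting `x, y` one has `x ∘ (x ∘ y) = 2 (x ^ 2 ∘ y)`; applying `φ` to this identity says
exactly that `φ x` commutes with `c = ⁅φ x, φ y⁆`, and symmetrically so does `φ y`.
The Kleinecke–Shirokov argument (iterate `⁅φ x, ·⁆` on powers of `φ y`) then gives
`n! ‖cⁿ‖ ≤ (2 ‖φ x‖ ‖φ y‖)ⁿ`. As `φ x, φ y` are self-adjoint, `c` is skew-adjoint, hence normal,
and in a C⋆-ring `‖c ^ 2 ^ k‖ = ‖c‖ ^ 2 ^ k`; letting `k → ∞` forces `c = 0`. Finally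
`2 φ (xy) = φ (x ∘ y) = φ x ∘ φ y = 2 φ x φ y`, and `N` has no `2`-torsion.
-/

open Filter Topology

section Commutator

variable {R : Type*} [Ring R] {a b : R}

theorem lie_pow_succ_of_commute (hb : Commute b ⁅a, b⁆) (n : ℕ) :
    ⁅a, b ^ (n + 1)⁆ = (n + 1) • (⁅a, b⁆ * b ^ n) := by
  induction n with
  | zero => simp
  | succ n ih =>
    calc ⁅a, b ^ (n + 1 + 1)⁆ = ⁅a, b ^ (n + 1)⁆ * b + b ^ (n + 1) * ⁅a, b⁆ := by
          simp only [Ring.lie_def, pow_succ]; noncomm_ring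
      _ = (n + 1 + 1) • (⁅a, b⁆ * b ^ (n + 1)) := by
          rw [ih, smul_mul_assoc, mul_assoc, ← pow_succ, (hb.pow_left (n + 1)).eq]
          exact (succ_nsmul _ _).symm

theorem lie_lie_pow_mul_pow_succ_of_commute (ha : Commute a ⁅a, b⁆) (hb : Commute b ⁅a, b⁆)
    (k m : ℕ) :
    ⁅a, ⁅a, b⁆ ^ k * b ^ (m + 1)⁆ = (m + 1) • (⁅a, b⁆ ^ (k + 1) * b ^ m) := by
  rw [Ring.lie_def, mul_assoc, (ha.pow_right k).left_comm, ← mul_sub, ← Ring.lie_def,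
    lie_pow_succ_of_commute hb, mul_smul_comm, ← mul_assoc, ← pow_succ]

end Commutator

section Norm

variable {R : Type*} [NormedRing R]

theorem norm_lie_le (a w : R) : ‖⁅a, w⁆‖ ≤ 2 * ‖a‖ * ‖w‖ := by
  calc ‖⁅a, w⁆‖ ≤ ‖a * w‖ + ‖w * a‖ := norm_sub_le _ _
    _ ≤ ‖a‖ * ‖w‖ + ‖w‖ * ‖a‖ := add_le_add (norm_mul_le _ _) (norm_mul_le _ _)
    _ = 2 * ‖a‖ * ‖w‖ := by ring

variable [NormedSpace ℝ R] {a b : R}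

theorem descFactorial_mul_norm_lie_pow_mul_pow_le (ha : Commute a ⁅a, b⁆)
    (hb : Commute b ⁅a, b⁆) (k m : ℕ) :
    ((m + k).descFactorial k : ℝ) * ‖⁅a, b⁆ ^ k * b ^ m‖ ≤ (2 * ‖a‖) ^ k * ‖b ^ (m + k)‖ := by
  induction k generalizing m with
  | zero => simp
  | succ k ih =>
    have hstep : ((m + 1 : ℕ) : ℝ) * ‖⁅a, b⁆ ^ (k + 1) * b ^ m‖
        ≤ 2 * ‖a‖ * ‖⁅a, b⁆ ^ k * b ^ (m + 1)‖ := by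
      rw [← nsmul_eq_mul, ← RCLike.norm_nsmul ℝ, ← lie_lie_pow_mul_pow_succ_of_commute ha hb]
      exact norm_lie_le _ _
    have hdesc : (m + (k + 1)).descFactorial (k + 1) = (m + 1) * (m + 1 + k).descFactorial k := by
      rw [Nat.descFactorial_succ, show m + (k + 1) - k = m + 1 by omega,
        show m + (k + 1) = m + 1 + k by omega]
    calc ((m + (k + 1)).descFactorial (k + 1) : ℝ) * ‖⁅a, b⁆ ^ (k + 1) * b ^ m‖
        = ((m + 1 + k).descFactorial k : ℝ) * (((m + 1 : ℕ) : ℝ) * ‖⁅a, b⁆ ^ (k + 1) * b ^ m‖) := by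
          rw [hdesc]; push_cast; ring
      _ ≤ ((m + 1 + k).descFactorial k : ℝ) * (2 * ‖a‖ * ‖⁅a, b⁆ ^ k * b ^ (m + 1)‖) := by
          gcongr
      _ = 2 * ‖a‖ * (((m + 1 + k).descFactorial k : ℝ) * ‖⁅a, b⁆ ^ k * b ^ (m + 1)‖) := by ring
      _ ≤ 2 * ‖a‖ * ((2 * ‖a‖) ^ k * ‖b ^ (m + 1 + k)‖) := by gcongr 2 * ‖a‖ * ?_; exact ih (m + 1)
      _ = (2 * ‖a‖) ^ (k + 1) * ‖b ^ (m + (k + 1))‖ := by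
          rw [show m + 1 + k = m + (k + 1) by omega]; ring

theorem factorial_mul_norm_lie_pow_le (ha : Commute a ⁅a, b⁆) (hb : Commute b ⁅a, b⁆) {n : ℕ}
    (hn : 0 < n) :
    (n.factorial : ℝ) * ‖⁅a, b⁆ ^ n‖ ≤ (2 * ‖a‖ * ‖b‖) ^ n := by
  have h := descFactorial_mul_norm_lie_pow_mul_pow_le ha hb n 0
  rw [zero_add, Nat.descFactorial_self, pow_zero, mul_one] at h
  calc (n.factorial : ℝ) * ‖⁅a, b⁆ ^ n‖ ≤ (2 * ‖a‖) ^ n * ‖b ^ n‖ := h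
    _ ≤ (2 * ‖a‖) ^ n * ‖b‖ ^ n := by gcongr; exact norm_pow_le' b hn
    _ = (2 * ‖a‖ * ‖b‖) ^ n := (mul_pow _ _ _).symm

end Norm

section CStarRing

variable {E : Type*} [NormedRing E] [StarRing E] [CStarRing E]

theorem IsStarNormal.norm_pow_two_pow (c : E) [IsStarNormal c] (n : ℕ) :
    ‖c ^ 2 ^ n‖ = ‖c‖ ^ 2 ^ n := by
  refine (mul_self_inj (norm_nonneg _) (by positivity)).mp ?_
  rw [← CStarRing.norm_star_mul_self, star_pow, ← (star_comm_self (x := c)).mul_pow,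
    (IsSelfAdjoint.star_mul_self c).norm_pow_two_pow, CStarRing.norm_star_mul_self, ← mul_pow]

theorem IsStarNormal.eq_zero_of_factorial_mul_norm_pow_le (c : E) [IsStarNormal c] (K : ℝ)
    (h : ∀ n, 0 < n → (n.factorial : ℝ) * ‖c ^ n‖ ≤ K ^ n) : c = 0 := by
  by_contra hc
  have hpos : 0 < ‖c‖ := norm_pos_iff.mpr hc
  have hge : ∀ k : ℕ, 1 ≤ (K / ‖c‖) ^ 2 ^ k / ((2 ^ k).factorial : ℝ) := fun k ↦ by
    rw [one_le_div (by positivity), div_pow, le_div_iff₀ (by positivity),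
      ← IsStarNormal.norm_pow_two_pow]
    exact h _ (by positivity)
  have hlim : Tendsto (fun k : ℕ ↦ (K / ‖c‖) ^ 2 ^ k / ((2 ^ k).factorial : ℝ)) atTop (𝓝 0) :=
    (FloorSemiring.tendsto_pow_div_factorial_atTop _).comp
      (tendsto_pow_atTop_atTop_of_one_lt one_lt_two)
  exact absurd (ge_of_tendsto' hlim hge) (by norm_num)

theorem commute_of_commute_lie [NormedSpace ℝ E] {a b : E} (ha : IsSelfAdjoint a)
    (hb : IsSelfAdjoint b) (hac : Commute a ⁅a, b⁆) (hbc : Commute b ⁅a, b⁆) : Commute a b := by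
  have : IsStarNormal ⁅a, b⁆ := by
    have hskew : star ⁅a, b⁆ = -⁅a, b⁆ := by
      rw [Ring.lie_def, star_sub, star_mul, star_mul, ha.star_eq, hb.star_eq, neg_sub]
    exact ⟨hskew ▸ (Commute.refl _).neg_left⟩
  exact sub_eq_zero.mp
    (IsStarNormal.eq_zero_of_factorial_mul_norm_pow_le _ _ fun _ ↦
      factorial_mul_norm_lie_pow_le hac hbc)

end CStarRing

section JordanMap

variable {F M N : Type*} [Ring M] [Ring N] [FunLike F M N] [AddMonoidHomClass F M N] (φ : F)

theorem map_mul_add_mul_of_map_sq (hsq : ∀ x, φ (x ^ 2) = φ x ^ 2) (a b : M) :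
    φ (a * b + b * a) = φ a * φ b + φ b * φ a := by
  have h := hsq (a + b)
  have hM : (a + b) ^ 2 = a ^ 2 + (a * b + b * a) + b ^ 2 := by noncomm_ring
  have hN : (φ a + φ b) ^ 2 = φ a ^ 2 + (φ a * φ b + φ b * φ a) + φ b ^ 2 := by noncomm_ring
  rw [hM, map_add, map_add, hsq, hsq, map_add φ a b, hN] at h
  exact add_left_cancel (add_right_cancel h)

theorem commute_map_lie_of_map_sq (hsq : ∀ x, φ (x ^ 2) = φ x ^ 2) {a b : M}
    (hab : Commute a b) : Commute (φ a) ⁅φ a, φ b⁆ := by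
  have hM : a * (a * b + b * a) + (a * b + b * a) * a
      = a ^ 2 * b + b * a ^ 2 + (a ^ 2 * b + b * a ^ 2) := by
    have h : a * (a * b + b * a) + (a * b + b * a) * a
        = a ^ 2 * b + b * a ^ 2 + (a ^ 2 * b + b * a ^ 2)
          + (a * (b * a - a * b) + (a * b - b * a) * a) := by
      noncomm_ring
    rw [h, hab.eq, sub_self, mul_zero, zero_mul, add_zero, add_zero]
  have h := map_mul_add_mul_of_map_sq φ hsq a (a * b + b * a)
  rw [hM, map_add, map_mul_add_mul_of_map_sq φ hsq, hsq, map_mul_add_mul_of_map_sq φ hsq] at h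
  set u := φ a
  set v := φ b
  calc u * ⁅u, v⁆
      = u * ⁅u, v⁆ + (u * (u * v + v * u) + (u * v + v * u) * u
          - (u ^ 2 * v + v * u ^ 2 + (u ^ 2 * v + v * u ^ 2))) := by rw [h, sub_self, add_zero]
    _ = ⁅u, v⁆ * u := by rw [Ring.lie_def]; noncomm_ring

theorem map_mul_of_map_sq [IsAddTorsionFree N] (hsq : ∀ x, φ (x ^ 2) = φ x ^ 2) {a b : M}
    (hab : Commute a b) (himg : Commute (φ a) (φ b)) : φ (a * b) = φ a * φ b := by
  refine nsmul_right_injective two_ne_zero ?_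
  calc 2 • φ (a * b) = φ (a * b + b * a) := by rw [← hab.eq, two_nsmul, map_add]
    _ = 2 • (φ a * φ b) := by rw [map_mul_add_mul_of_map_sq φ hsq, ← himg.eq, two_nsmul]

end JordanMap

theorem jordan_hom_mult_on_commuting_selfadjoint_general
    {M N : Type*}
    [NormedRing M] [StarRing M] [NormedAlgebra ℂ M]
    [NormedRing N] [StarRing N] [CStarRing N] [NormedAlgebra ℂ N]
    (φ : M →ₗ[ℂ] N)
    (hstar : ∀ x : M, φ (star x) = star (φ x))
    (hsq : ∀ x : M, φ (x ^ 2) = φ x ^ 2)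
    (x y : M) (hx : star x = x) (hy : star y = y) (hxy : x * y = y * x) :
    φ x * φ y = φ y * φ x ∧ φ (x * y) = φ x * φ y := by
  have hφx : IsSelfAdjoint (φ x) := by rw [IsSelfAdjoint, ← hstar, hx]
  have hφy : IsSelfAdjoint (φ y) := by rw [IsSelfAdjoint, ← hstar, hy]
  have hxy : Commute x y := hxy
  have hcomm : Commute (φ x) (φ y) :=
    commute_of_commute_lie hφx hφy (commute_map_lie_of_map_sq φ hsq hxy)
      (by simpa only [Ring.lie_def, neg_sub] using
        (commute_map_lie_of_map_sq φ hsq hxy.symm).neg_right)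
  have : IsAddTorsionFree N := .of_isTorsionFree ℂ N
  exact ⟨hcomm, map_mul_of_map_sq φ hsq hxy hcomm⟩

/-- A Jordan homomorphism between unital C*-algebras is multiplicative on commuting
self-adjoint elements, and their images commute. -/
theorem jordan_hom_mult_on_commuting_selfadjoint
    {M N : Type*}
    [NormedRing M] [StarRing M] [CStarRing M] [NormedAlgebra ℂ M]
    [StarModule ℂ M] [CompleteSpace M]
    [NormedRing N] [StarRing N] [CStarRing N] [NormedAlgebra ℂ N]
    [StarModule ℂ N] [CompleteSpace N]
    (φ : M →ₗ[ℂ] N)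
    (hunit : φ 1 = 1)
    (hstar : ∀ x : M, φ (star x) = star (φ x))
    (hsq : ∀ x : M, φ (x ^ 2) = φ x ^ 2)
    (x y : M) (hx : star x = x) (hy : star y = y) (hxy : x * y = y * x) :
    φ x * φ y = φ y * φ x ∧ φ (x * y) = φ x * φ y :=
  jordan_hom_mult_on_commuting_selfadjoint_general φ hstar hsq x y hx hy hxy
end
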